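/- arXiv:2509.23369 — 2 statements merged into one kernel-verified Lean document; each statement's English description precedes it below -/
import Mathlib

section
/- In the algebra generated by n pairwise-commuting units u_1,...,u_n over a commutative ring, with basis elements e_p := Π_{k=0}^{n-1} u_{k+1}^{p_k} indexed by the binary digits p_k of p ∈ Fin(2^n), the product of two basis elements satisfies e_p * e_q = c(p,q) · e_{p XOR q} for some scalar c(p,q) determined by the squares u_i², where XOR is the bitwise XOR of the indices. -/
/-- Bitwise XOR on `Fin (2^n)`. -/
def finXor {n : ℕ} (p q : Fin (2 ^ n)) : Fin (2 ^ n) :=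
  ⟨p.val ^^^ q.val, Nat.xor_lt_two_pow p.isLt q.isLt⟩

lemma pow_bit_add {R : Type*} [CommRing R] {A : Type*} [Ring A] [Algebra R A]
    {n : ℕ} (u : Fin n → A) (c : Fin n → R)
    (hsq : ∀ i, u i ^ 2 = c i • (1 : A))
    (k : Fin n) {a b : ℕ} (ha : a ≤ 1) (hb : b ≤ 1) :
    u k ^ (a + b) = (c k ^ (a * b)) • u k ^ (a ^^^ b) := by
  interval_cases a <;> interval_cases b <;>
    simp [hsq k, Algebra.smul_def]

lemma list_aux {R : Type*} [CommRing R] {A : Type*} [Ring A] [Algebra R A]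
    {n : ℕ} (u : Fin n → A) (c : Fin n → R)
    (hcomm : ∀ i j, u i * u j = u j * u i)
    (hsq : ∀ i, u i ^ 2 = c i • (1 : A))
    (B C : Fin n → ℕ) (hB : ∀ k, B k ≤ 1) (hC : ∀ k, C k ≤ 1) :
    ∀ L : List (Fin n), ∃ d : R,
      (L.map fun k => u k ^ B k).prod * (L.map fun k => u k ^ C k).prod
        = d • (L.map fun k => u k ^ (B k ^^^ C k)).prod := by
  intro L
  induction L with
  | nil => exact ⟨1, by simp⟩
  | cons h t ih =>
    obtain ⟨d, hd⟩ := ih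
    refine ⟨c h ^ (B h * C h) * d, ?_⟩
    have hcom : Commute ((t.map fun k => u k ^ B k).prod) (u h ^ C h) := by
      apply Commute.list_prod_left
      intro y hy
      simp only [List.mem_map] at hy
      obtain ⟨k, -, rfl⟩ := hy
      exact Commute.pow_pow (hcomm k h) _ _
    simp only [List.map_cons, List.prod_cons]
    calc u h ^ B h * (t.map fun k => u k ^ B k).prod *
          (u h ^ C h * (t.map fun k => u k ^ C k).prod)
        = u h ^ B h * ((t.map fun k => u k ^ B k).prod * u h ^ C h) *
          (t.map fun k => u k ^ C k).prod := by simp only [mul_assoc]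
      _ = u h ^ B h * (u h ^ C h * (t.map fun k => u k ^ B k).prod) *
          (t.map fun k => u k ^ C k).prod := by rw [hcom.eq]
      _ = (u h ^ B h * u h ^ C h) *
          ((t.map fun k => u k ^ B k).prod * (t.map fun k => u k ^ C k).prod) := by simp only [mul_assoc]
      _ = (u h ^ (B h + C h)) * (d • (t.map fun k => u k ^ (B k ^^^ C k)).prod) := by
          rw [← pow_add, hd]
      _ = ((c h ^ (B h * C h)) • u h ^ (B h ^^^ C h)) *
          (d • (t.map fun k => u k ^ (B k ^^^ C k)).prod) := by
          rw [pow_bit_add u c hsq h (hB h) (hC h)]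
      _ = (c h ^ (B h * C h) * d) •
          (u h ^ (B h ^^^ C h) * (t.map fun k => u k ^ (B k ^^^ C k)).prod) := by
          rw [smul_mul_smul_comm]

/-- In the algebra generated by `n` pairwise commuting units whose squares are scalars
in `{-1, 0, 1}`, the product of two standard basis elements
`e p := ∏ k, u (k+1) ^ p_k` lies on the axis of `e (p XOR q)`. -/
theorem basis_mul_eq_smul_xor {R : Type*} [CommRing R] {A : Type*} [Ring A] [Algebra R A]
    {n : ℕ} (u : Fin n → A) (c : Fin n → R)
    (hcomm : ∀ i j, u i * u j = u j * u i)
    (hc : ∀ i, c i ∈ ({-1, 0, 1} : Set R))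
    (hsq : ∀ i, u i ^ 2 = c i • (1 : A))
    (e : Fin (2 ^ n) → A)
    (he : ∀ p, e p = ((List.finRange n).map (fun k => u k ^ (p.val.testBit k.val).toNat)).prod) :
    ∀ p q, ∃ d : R, e p * e q = d • e (finXor p q) := by
  intro p q
  obtain ⟨d, hd⟩ := list_aux u c hcomm hsq
    (fun k => (p.val.testBit k.val).toNat) (fun k => (q.val.testBit k.val).toNat)
    (fun k => Bool.toNat_le _) (fun k => Bool.toNat_le _) (List.finRange n)
  refine ⟨d, ?_⟩
  rw [he, he, he, hd]
  congr 1
  refine congrArg (List.prod (α := A)) ?_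
  apply List.map_congr_left
  intro k _
  congr 1
  show (p.val.testBit k.val).toNat ^^^ (q.val.testBit k.val).toNat
      = ((p.val ^^^ q.val).testBit k.val).toNat
  rw [Nat.testBit_xor]
  cases p.val.testBit k.val <;> cases q.val.testBit k.val <;> decide
end

section
/- Under the hypotheses: {e_p}_{p<2^n} is a basis of an algebra with e_p * e_q = s(p,q) e_{p⊕q} (⊕ = bitwise XOR), and T is an invertible change-of-coordinates matrix to a diagonal basis satisfying s(p,q) T_{α, p⊕q} = T_{α,p} T_{α,q} for all α,p,q — then every entry of T is nonzero. -/
/-- If `T α p ^ 2 = s p * T α z` for a fixed column `z`, a zero entry of `T` would force either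
the column `p` (when `s p = 0`) or the row `α` (when `T α z = 0`) to vanish. -/
theorem Matrix.apply_ne_zero_of_mul_self_eq {ι R : Type*} [Fintype ι] [DecidableEq ι]
    [CommRing R] [IsDomain R] {T : Matrix ι ι R} (hT : IsUnit T) (s : ι → R) (z : ι)
    (hsq : ∀ α p, s p * T α z = T α p * T α p) (α p : ι) : T α p ≠ 0 := by
  have hdet : T.det ≠ 0 := (T.isUnit_iff_isUnit_det.mp hT).ne_zero
  have hs : ∀ p, s p ≠ 0 := fun p hp => hdet <| T.det_eq_zero_of_column_eq_zero p fun α =>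
    mul_self_eq_zero.mp (by rw [← hsq, hp, zero_mul])
  have hz : ∀ α, T α z ≠ 0 := fun α hα => hdet <| T.det_eq_zero_of_row_eq_zero α fun p =>
    mul_self_eq_zero.mp (by rw [← hsq, hα, mul_zero])
  intro hp
  exact mul_ne_zero (hs p) (hz α) (by rw [hsq, hp, zero_mul])

theorem finXor_self {n : ℕ} (p : Fin (2 ^ n)) : finXor p p = 0 := by
  simp [finXor]

/-- If an invertible change-of-coordinates matrix `T` to a diagonal basis satisfies
`s p q * T α (p ⊕ q) = T α p * T α q`, then every entry of `T` is nonzero. -/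
theorem entries_nonzero {K : Type*} [Field K] {n : ℕ}
    (s : Fin (2 ^ n) → Fin (2 ^ n) → K)
    (T : Matrix (Fin (2 ^ n)) (Fin (2 ^ n)) K) (hT : IsUnit T)
    (hrel : ∀ α p q, s p q * T α (finXor p q) = T α p * T α q) :
    ∀ α p, T α p ≠ 0 :=
  T.apply_ne_zero_of_mul_self_eq hT (fun p => s p p) 0 fun α p => by
    simpa only [finXor_self] using hrel α p p
end
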